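/- arXiv:2204.06704 — 11 statements merged into one kernel-verified Lean document; each statement's English description precedes it below -/
import Mathlib

section
/- Let k be a positive natural number, let ε > 0 and Δ > 0, and let v, v' : Fin k → ℝ satisfy ∑ i, |v i − v' i| ≤ Δ (i.e. the ℓ1 distance between v and v' is at most Δ). Let L be the product measure on Fin k → ℝ whose coordinates are i.i.d. Lap(Δ/ε). Then the pushforward of L under the translation y ↦ v + y and the pushforward of L under y ↦ v' + y are (ε, 0)-indistinguishable. (Laplace mechanism: adding independent Laplace noise of scale Δ/ε to each coordinate of a statistic with ℓ1-sensitivity Δ yields ε-differential privacy.) -/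
open MeasureTheory Real

/-- The Laplace measure `Lap(b)` on `ℝ` with scale `b`: the measure with density
`y ↦ (2b)⁻¹ · exp(−|y|/b)` with respect to Lebesgue measure. -/
noncomputable def laplaceMeasure (b : ℝ) : Measure ℝ :=
  volume.withDensity fun y => ENNReal.ofReal ((2 * b)⁻¹ * Real.exp (-|y| / b))

/-- Measures `μ` and `ν` are `(ε, δ)`-indistinguishable if for every measurable set `S`,
`μ S ≤ exp ε * ν S + δ`. -/
def Indist {X : Type*} [MeasurableSpace X] (μ ν : Measure X) (ε δ : ℝ) : Prop :=
  ∀ S : Set X, MeasurableSet S →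
    μ S ≤ ENNReal.ofReal (Real.exp ε) * ν S + ENNReal.ofReal δ

instance laplaceMeasure.sigmaFinite (b : ℝ) : SigmaFinite (laplaceMeasure b) :=
  SigmaFinite.withDensity_ofReal _

open scoped ENNReal

/-- Tonelli for products over `Fin n`. -/
lemma lintegral_fin_prod_eq_prod : ∀ (n : ℕ) (f : Fin n → ℝ → ℝ≥0∞),
    (∀ i, Measurable (f i)) →
    ∫⁻ x : Fin n → ℝ, ∏ i, f i (x i) ∂(Measure.pi fun _ => (volume : Measure ℝ))
      = ∏ i, ∫⁻ x, f i x
  | 0, f, _ => by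
      simp [Measure.pi_of_empty fun _ : Fin 0 => (volume : Measure ℝ)]
  | (n + 1), f, hf => by
      calc
        ∫⁻ x : Fin (n + 1) → ℝ, ∏ i, f i (x i)
            ∂(Measure.pi fun _ => (volume : Measure ℝ))
          = ∫⁻ p : ℝ × (Fin n → ℝ), f 0 p.1 * ∏ i : Fin n, f i.succ (p.2 i)
              ∂((volume : Measure ℝ).prod (Measure.pi fun _ => (volume : Measure ℝ))) := by
            rw [← ((measurePreserving_piFinSuccAbove
                (fun _ : Fin (n + 1) => (volume : Measure ℝ)) 0).symm).lintegral_comp_emb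
                (MeasurableEquiv.measurableEmbedding _)]
            congr 1
            funext p
            simp [MeasurableEquiv.piFinSuccAbove_symm_apply, Fin.insertNthEquiv,
              Fin.prod_univ_succ, Fin.insertNth_zero]
        _ = (∫⁻ x, f 0 x) * ∏ i : Fin n, ∫⁻ x, f i.succ x := by
            have hg : Measurable fun y : Fin n → ℝ => ∏ i : Fin n, f i.succ (y i) :=
              Finset.measurable_prod _ fun i _ =>
                (hf i.succ).comp (measurable_pi_apply i)
            rw [lintegral_prod_mul (μ := (volume : Measure ℝ))
              (ν := Measure.pi fun _ : Fin n => (volume : Measure ℝ))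
              (hf 0).aemeasurable hg.aemeasurable,
              lintegral_fin_prod_eq_prod n _ fun i => hf i.succ]
        _ = ∏ i, ∫⁻ x, f i x := by rw [Fin.prod_univ_succ]

/-- A product of `withDensity` measures is `withDensity` of the product density. -/
lemma pi_withDensity (k : ℕ) (f : ℝ → ℝ≥0∞) (hf : Measurable f)
    [SigmaFinite (volume.withDensity f)] :
    (Measure.pi fun _ : Fin k => volume.withDensity f)
      = (Measure.pi fun _ : Fin k => (volume : Measure ℝ)).withDensity
          (fun x => ∏ i, f (x i)) := by
  refine Measure.pi_eq (μ := fun _ : Fin k => volume.withDensity f)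
    (μ' := (Measure.pi fun _ : Fin k => (volume : Measure ℝ)).withDensity
      (fun x => ∏ i, f (x i))) fun s hs => ?_
  rw [withDensity_apply _ (MeasurableSet.univ_pi hs),
    ← lintegral_indicator (MeasurableSet.univ_pi hs) _]
  have key : ∀ x : Fin k → ℝ,
      (Set.pi Set.univ s).indicator (fun x => ∏ i, f (x i)) x
        = ∏ i, (s i).indicator f (x i) := by
    intro x
    by_cases hx : x ∈ Set.pi Set.univ s
    · rw [Set.indicator_of_mem hx]
      exact Finset.prod_congr rfl fun i _ =>
        (Set.indicator_of_mem (hx i (Set.mem_univ i)) f).symm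
    · rw [Set.indicator_of_notMem hx]
      rw [Set.mem_univ_pi] at hx
      push_neg at hx
      obtain ⟨i, hi⟩ := hx
      exact (Finset.prod_eq_zero (Finset.mem_univ i)
        (Set.indicator_of_notMem hi f)).symm
  simp_rw [key]
  rw [lintegral_fin_prod_eq_prod k _ fun i => hf.indicator (hs i)]
  exact Finset.prod_congr rfl fun i _ => by
    rw [lintegral_indicator (hs i) _, withDensity_apply _ (hs i)]

/-- Translating a `withDensity` of the pi Lebesgue measure translates the density. -/
lemma map_add_withDensity {k : ℕ} (v : Fin k → ℝ) (g : (Fin k → ℝ) → ℝ≥0∞)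
    (hg : Measurable g) :
    Measure.map (fun y => v + y)
        ((Measure.pi fun _ : Fin k => (volume : Measure ℝ)).withDensity g)
      = (Measure.pi fun _ : Fin k => (volume : Measure ℝ)).withDensity
          (fun x => g (x - v)) := by
  have hπ : (Measure.pi fun _ : Fin k => (volume : Measure ℝ))
      = (volume : Measure (Fin k → ℝ)) := (volume_pi).symm
  have hmp : MeasurePreserving (fun y : Fin k → ℝ => v + y)
      (Measure.pi fun _ : Fin k => (volume : Measure ℝ))
      (Measure.pi fun _ : Fin k => (volume : Measure ℝ)) := by
    rw [hπ]; exact measurePreserving_add_left volume v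
  ext S hS
  rw [Measure.map_apply (measurable_const_add v) hS, withDensity_apply _ hS,
    withDensity_apply _ ((measurable_const_add v) hS)]
  have := hmp.setLIntegral_comp_preimage_emb
    ((MeasurableEquiv.addLeft v).measurableEmbedding)
    (fun x => g (x - v)) S
  simpa using this

/-- Laplace mechanism: adding i.i.d. Laplace noise of scale `Δ/ε` to each coordinate of a
statistic with ℓ1-sensitivity at most `Δ` yields `ε`-differential privacy. -/
theorem laplace_mechanism (k : ℕ) (hk : 0 < k) (ε Δ : ℝ) (hε : 0 < ε) (hΔ : 0 < Δ)
    (v v' : Fin k → ℝ) (hsens : ∑ i, |v i - v' i| ≤ Δ) :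
    Indist
      (Measure.map (fun y => v + y) (Measure.pi fun _ : Fin k => laplaceMeasure (Δ / ε)))
      (Measure.map (fun y => v' + y) (Measure.pi fun _ : Fin k => laplaceMeasure (Δ / ε)))
      ε 0 := by
  set b : ℝ := Δ / ε with hbdef
  have hb : 0 < b := div_pos hΔ hε
  set F : ℝ → ℝ≥0∞ := fun t => ENNReal.ofReal ((2 * b)⁻¹ * Real.exp (-|t| / b)) with hFdef
  have hFcont : Continuous fun t : ℝ => (2 * b)⁻¹ * Real.exp (-|t| / b) :=
    continuous_const.mul ((continuous_abs.neg.div_const b).rexp)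
  have hF : Measurable F := hFcont.measurable.ennreal_ofReal
  have hlap : laplaceMeasure b = volume.withDensity F := rfl
  have hpi : (Measure.pi fun _ : Fin k => laplaceMeasure b)
      = (Measure.pi fun _ : Fin k => (volume : Measure ℝ)).withDensity
          (fun x => ∏ i, F (x i)) := by
    rw [hlap]; exact pi_withDensity k F hF
  have hprodmeas : Measurable fun x : Fin k → ℝ => ∏ i, F (x i) :=
    Finset.measurable_prod _ fun i _ => hF.comp (measurable_pi_apply i)
  have hmap : ∀ w : Fin k → ℝ,
      Measure.map (fun y => w + y) (Measure.pi fun _ : Fin k => laplaceMeasure b)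
        = (Measure.pi fun _ : Fin k => (volume : Measure ℝ)).withDensity
            (fun x => ∏ i, F (x i - w i)) := by
    intro w
    rw [hpi, map_add_withDensity w _ hprodmeas]
    rfl
  intro S hS
  rw [hmap v, hmap v', withDensity_apply _ hS, withDensity_apply _ hS]
  simp only [ENNReal.ofReal_zero, add_zero]
  have hmeas' : Measurable fun x : Fin k → ℝ =>
      ENNReal.ofReal (Real.exp ε) * ∏ i, F (x i - v' i) :=
    (Finset.measurable_prod _ fun i _ =>
      hF.comp ((measurable_pi_apply i).sub measurable_const)).const_mul _
  have hmeasv' : Measurable fun x : Fin k → ℝ => ∏ i, F (x i - v' i) :=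
    Finset.measurable_prod _ fun i _ => hF.comp ((measurable_pi_apply i).sub measurable_const)
  rw [← lintegral_const_mul _ hmeasv']
  refine setLIntegral_mono hmeas' fun x _ => ?_
  -- pointwise inequality
  have hcnn : (0:ℝ) ≤ (2 * b)⁻¹ := by positivity
  have hterm : ∀ (w : Fin k → ℝ) i, (0:ℝ) ≤ (2 * b)⁻¹ * Real.exp (-|x i - w i| / b) :=
    fun w i => mul_nonneg hcnn (Real.exp_nonneg _)
  rw [hFdef]
  simp only
  rw [← ENNReal.ofReal_prod_of_nonneg fun i _ => hterm v i,
    ← ENNReal.ofReal_prod_of_nonneg fun i _ => hterm v' i,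
    ← ENNReal.ofReal_mul (Real.exp_nonneg ε)]
  apply ENNReal.ofReal_le_ofReal
  have hprodform : ∀ w : Fin k → ℝ,
      ∏ i, (2 * b)⁻¹ * Real.exp (-|x i - w i| / b)
        = (2 * b)⁻¹ ^ k * Real.exp (∑ i, -|x i - w i| / b) := by
    intro w
    rw [Finset.prod_mul_distrib, Finset.prod_const, Finset.card_univ, Fintype.card_fin,
      Real.exp_sum]
  rw [hprodform v, hprodform v', mul_comm (Real.exp ε), mul_assoc, ← Real.exp_add]
  refine mul_le_mul_of_nonneg_left ?_ (by positivity)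
  apply Real.exp_le_exp.mpr
  have hsum : ∑ i, |x i - v' i| - ∑ i, |x i - v i| ≤ Δ := by
    rw [← Finset.sum_sub_distrib]
    refine le_trans (Finset.sum_le_sum fun i _ => ?_) hsens
    have := abs_sub_abs_le_abs_sub (x i - v' i) (x i - v i)
    calc |x i - v' i| - |x i - v i| ≤ |(x i - v' i) - (x i - v i)| := this
      _ = |v i - v' i| := by ring_nf
  have hεb : ε * b = Δ := by
    rw [hbdef]; field_simp
  have key : (∑ i, |x i - v' i| - ∑ i, |x i - v i|) / b ≤ ε := by
    rw [div_le_iff₀ hb]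
    calc (∑ i, |x i - v' i|) - ∑ i, |x i - v i| ≤ Δ := hsum
      _ = ε * b := hεb.symm
  simp only [neg_div, Finset.sum_neg_distrib, ← Finset.sum_div]
  have hsd := sub_div (∑ i, |x i - v' i|) (∑ i, |x i - v i|) b
  linarith [key, hsd.le, hsd.ge]
end

section
/- Let v > 0 be a variance, let a, b ∈ ℝ, and let λ > 1. Then ∫ y, (gaussianPDFReal a v y)^λ · (gaussianPDFReal b v y)^(1−λ) dy = exp(λ · (λ − 1) · (a − b)² / (2v)). Equivalently, the Rényi divergence of order λ between two Gaussian distributions with means a and b and common variance v equals λ(a − b)²/(2v). -/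
open MeasureTheory ProbabilityTheory Real

/-- The Rényi divergence of order `l ∈ (1, ∞)` between two Gaussian densities with means
`a` and `b` and common variance `v` equals `l (a − b)² / (2v)`; equivalently, the integral
`∫ y, (gaussianPDFReal a v y)^l · (gaussianPDFReal b v y)^(1−l) dy` equals
`exp (l (l − 1) (a − b)² / (2v))`. -/
theorem renyi_divergence_gaussian (v : NNReal) (hv : 0 < v) (a b : ℝ) (l : ℝ) (hl : 1 < l) :
    ∫ y : ℝ, (gaussianPDFReal a v y) ^ l * (gaussianPDFReal b v y) ^ (1 - l) =
      Real.exp (l * (l - 1) * (a - b) ^ 2 / (2 * (v : ℝ))) := by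
  have hv' : (v : ℝ) ≠ 0 := by exact_mod_cast hv.ne'
  have hvpos : (0 : ℝ) < v := by exact_mod_cast hv
  have hc : (0 : ℝ) < (√(2 * π * v))⁻¹ := by
    refine inv_pos.mpr (Real.sqrt_pos.mpr ?_)
    positivity
  have key : ∀ y : ℝ, (gaussianPDFReal a v y) ^ l * (gaussianPDFReal b v y) ^ (1 - l) =
      Real.exp (l * (l - 1) * (a - b) ^ 2 / (2 * (v : ℝ))) *
        gaussianPDFReal (l * a + (1 - l) * b) v y := by
    intro y
    simp only [gaussianPDFReal]
    rw [Real.mul_rpow hc.le (Real.exp_pos _).le, Real.mul_rpow hc.le (Real.exp_pos _).le,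
      ← Real.exp_log (Real.exp_pos (- (y - a)^2 / (2 * v))),
      Real.log_exp, ← Real.exp_mul, ← Real.exp_mul]
    rw [show ((√(2 * π * v))⁻¹ ^ l * Real.exp (- (y - a)^2 / (2 * v) * l)) *
        ((√(2 * π * v))⁻¹ ^ (1 - l) * Real.exp (- (y - b)^2 / (2 * v) * (1 - l))) =
        ((√(2 * π * v))⁻¹ ^ l * (√(2 * π * v))⁻¹ ^ (1 - l)) *
        (Real.exp (- (y - a)^2 / (2 * v) * l) * Real.exp (- (y - b)^2 / (2 * v) * (1 - l)))
        by ring]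
    rw [← Real.rpow_add hc, ← Real.exp_add]
    rw [show l + (1 - l) = 1 by ring, Real.rpow_one]
    rw [show Real.exp (l * (l - 1) * (a - b) ^ 2 / (2 * (v : ℝ))) *
        ((√(2 * π * v))⁻¹ * Real.exp (- (y - (l * a + (1 - l) * b))^2 / (2 * v))) =
        (√(2 * π * v))⁻¹ * (Real.exp (l * (l - 1) * (a - b) ^ 2 / (2 * (v : ℝ))) *
          Real.exp (- (y - (l * a + (1 - l) * b))^2 / (2 * v))) by ring, ← Real.exp_add]
    congr 1
    field_simp
    ring
  calc ∫ y : ℝ, (gaussianPDFReal a v y) ^ l * (gaussianPDFReal b v y) ^ (1 - l)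
      = ∫ y : ℝ, Real.exp (l * (l - 1) * (a - b) ^ 2 / (2 * (v : ℝ))) *
          gaussianPDFReal (l * a + (1 - l) * b) v y := by
        exact integral_congr_ae (Filter.Eventually.of_forall key)
    _ = Real.exp (l * (l - 1) * (a - b) ^ 2 / (2 * (v : ℝ))) *
          ∫ y : ℝ, gaussianPDFReal (l * a + (1 - l) * b) v y := integral_const_mul _ _
    _ = Real.exp (l * (l - 1) * (a - b) ^ 2 / (2 * (v : ℝ))) := by
        rw [ProbabilityTheory.integral_gaussianPDFReal_eq_one _ hv.ne', mul_one]
end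

section
/- Let k be a positive natural number, Δ > 0, ρ > 0, and let v, v' : Fin k → ℝ satisfy ∑ i, |v i − v' i| ≤ Δ (ℓ1-sensitivity at most Δ). Set σ² = Δ²/(2ρ), and let μ and ν be the product measures on Fin k → ℝ whose i-th coordinates are the Gaussian measures with means v i and v' i respectively and common variance σ². Then μ ≪ ν and for every λ > 1, ∫⁻ (μ.rnDeriv ν)^λ dν ≤ exp(λ · (λ − 1) · ρ); that is, the Rényi divergence of order λ between μ and ν is at most λρ for every λ ∈ (1, ∞). (Gaussian mechanism: adding independent Gaussian noise of variance Δ²/(2ρ) to each coordinate of a statistic with ℓ1-sensitivity Δ satisfies ρ-zero-concentrated differential privacy.) -/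
/-!
The density of `N(m, σ²)` with respect to `N(m', σ²)` is `exp (((y - m')² - (y - m)²) / (2σ²))`;
integrating its `l`-th power against `N(m', σ²)` completes the square and leaves the constant
`exp (l (l - 1) (m - m')² / (2σ²))`. The Radon–Nikodym derivative of two product measures is the
product of the coordinatewise derivatives, so this integral is multiplicative over coordinates
and equals `exp (l (l - 1) ‖v - v'‖₂² / (2σ²))`. Finally `‖v - v'‖₂ ≤ ‖v - v'‖₁ ≤ Δ` and
`2σ² = Δ² / ρ`.
-/

open MeasureTheory ProbabilityTheory Real
open scoped ENNReal NNReal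

namespace MeasureTheory.Measure

variable {ι : Type*} [Fintype ι] {X : ι → Type*} [∀ i, MeasurableSpace (X i)]
  {μ ν : ∀ i, Measure (X i)} [∀ i, IsProbabilityMeasure (ν i)]

theorem lintegral_pi_prod_eq_prod {f : ∀ i, X i → ℝ≥0∞} (hf : ∀ i, Measurable (f i)) :
    ∫⁻ x, ∏ i, f i (x i) ∂Measure.pi ν = ∏ i, ∫⁻ y, f i y ∂ν i := by
  rw [lintegral_prod_eq_prod_lintegral_of_indepFun _ _
    (iIndepFun_pi fun i => (hf i).aemeasurable) fun i => (hf i).comp (measurable_pi_apply i)]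
  exact Finset.prod_congr rfl fun i _ => (measurePreserving_eval ν i).lintegral_comp (hf i)

variable [∀ i, SigmaFinite (μ i)]

theorem pi_eq_withDensity_prod_rnDeriv (hμν : ∀ i, μ i ≪ ν i) :
    Measure.pi μ = (Measure.pi ν).withDensity fun x => ∏ i, (μ i).rnDeriv (ν i) (x i) := by
  refine pi_eq fun s hs => ?_
  have hind : (Set.univ.pi s).indicator (fun x => ∏ i, (μ i).rnDeriv (ν i) (x i))
      = fun x => ∏ i, (s i).indicator ((μ i).rnDeriv (ν i)) (x i) := by
    ext x
    classical
    simp only [Set.indicator_apply, Set.mem_univ_pi, Fintype.prod_ite_zero]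
  rw [withDensity_apply _ (.univ_pi hs), ← lintegral_indicator (.univ_pi hs), hind,
    lintegral_pi_prod_eq_prod fun i => (measurable_rnDeriv _ _).indicator (hs i)]
  exact Finset.prod_congr rfl fun i _ => by
    rw [lintegral_indicator (hs i), setLIntegral_rnDeriv (hμν i)]

theorem absolutelyContinuous_pi (hμν : ∀ i, μ i ≪ ν i) : Measure.pi μ ≪ Measure.pi ν :=
  pi_eq_withDensity_prod_rnDeriv hμν ▸ withDensity_absolutelyContinuous _ _

theorem rnDeriv_pi (hμν : ∀ i, μ i ≪ ν i) :
    (Measure.pi μ).rnDeriv (Measure.pi ν) =ᵐ[Measure.pi ν]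
      fun x => ∏ i, (μ i).rnDeriv (ν i) (x i) := by
  rw [pi_eq_withDensity_prod_rnDeriv hμν]
  exact rnDeriv_withDensity _ <|
    Finset.measurable_prod _ fun i _ => (measurable_rnDeriv _ _).comp (measurable_pi_apply i)

theorem lintegral_rnDeriv_pi_rpow (hμν : ∀ i, μ i ≪ ν i) {l : ℝ} (hl : 0 ≤ l) :
    ∫⁻ x, (Measure.pi μ).rnDeriv (Measure.pi ν) x ^ l ∂Measure.pi ν
      = ∏ i, ∫⁻ y, (μ i).rnDeriv (ν i) y ^ l ∂ν i := by
  rw [lintegral_congr_ae ((rnDeriv_pi hμν).mono fun x hx => by rw [hx]),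
    ← lintegral_pi_prod_eq_prod fun i => (measurable_rnDeriv _ _).pow_const l]
  simp_rw [ENNReal.prod_rpow_of_nonneg hl]

end MeasureTheory.Measure

namespace ProbabilityTheory

variable {V : ℝ≥0}

theorem gaussianPDFReal_div (m m' : ℝ) (hV : V ≠ 0) (y : ℝ) :
    gaussianPDFReal m V y / gaussianPDFReal m' V y
      = rexp (((y - m') ^ 2 - (y - m) ^ 2) / (2 * V)) := by
  have hc : ((√(2 * π * V))⁻¹ : ℝ) ≠ 0 := by positivity
  rw [gaussianPDFReal, gaussianPDFReal, mul_div_mul_left _ _ hc, ← Real.exp_sub]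
  ring_nf

theorem gaussianPDFReal_mul_div_rpow (m m' : ℝ) (hV : V ≠ 0) (l y : ℝ) :
    gaussianPDFReal m' V y * (gaussianPDFReal m V y / gaussianPDFReal m' V y) ^ l
      = rexp (l * (l - 1) * ((m - m') ^ 2 / (2 * V)))
          * gaussianPDFReal (m' + l * (m - m')) V y := by
  have hV' : (2 * V : ℝ) ≠ 0 := by positivity
  rw [gaussianPDFReal_div m m' hV, ← Real.exp_mul, gaussianPDFReal, gaussianPDFReal,
    mul_left_comm, mul_assoc, ← Real.exp_add, ← Real.exp_add]
  congr 2
  field_simp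
  ring

theorem gaussianReal_eq_withDensity_gaussianPDF_div (m m' : ℝ) (hV : V ≠ 0) :
    gaussianReal m V
      = (gaussianReal m' V).withDensity (gaussianPDF m V / gaussianPDF m' V) := by
  rw [gaussianReal_of_var_ne_zero _ hV, gaussianReal_of_var_ne_zero _ hV,
    ← withDensity_mul _ (measurable_gaussianPDF _ _)
      ((measurable_gaussianPDF _ _).div (measurable_gaussianPDF _ _))]
  congr 1
  ext y
  exact (ENNReal.mul_div_cancel (gaussianPDF_pos _ hV _).ne' ENNReal.ofReal_ne_top).symm

theorem gaussianReal_absolutelyContinuous_gaussianReal (m m' : ℝ) (hV : V ≠ 0) :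
    gaussianReal m V ≪ gaussianReal m' V :=
  gaussianReal_eq_withDensity_gaussianPDF_div m m' hV ▸ withDensity_absolutelyContinuous _ _

theorem lintegral_rnDeriv_gaussianReal_rpow (m m' : ℝ) (hV : V ≠ 0) (l : ℝ) :
    ∫⁻ y, (gaussianReal m V).rnDeriv (gaussianReal m' V) y ^ l ∂gaussianReal m' V
      = ENNReal.ofReal (rexp (l * (l - 1) * ((m - m') ^ 2 / (2 * V)))) := by
  have hratio : Measurable (gaussianPDF m V / gaussianPDF m' V) :=
    (measurable_gaussianPDF _ _).div (measurable_gaussianPDF _ _)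
  have hrn := Measure.rnDeriv_withDensity (gaussianReal m' V) hratio
  rw [← gaussianReal_eq_withDensity_gaussianPDF_div m m' hV] at hrn
  rw [lintegral_congr_ae (hrn.mono fun y hy => by rw [hy])]
  conv_lhs => rw [gaussianReal_of_var_ne_zero _ hV]
  rw [lintegral_withDensity_eq_lintegral_mul _ (measurable_gaussianPDF _ _) (hratio.pow_const l)]
  have hpoint : ∀ y, gaussianPDF m' V y * (gaussianPDF m V y / gaussianPDF m' V y) ^ l
      = ENNReal.ofReal (rexp (l * (l - 1) * ((m - m') ^ 2 / (2 * V))))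
          * ENNReal.ofReal (gaussianPDFReal (m' + l * (m - m')) V y) := by
    intro y
    have hpos := gaussianPDFReal_pos m' V y hV
    rw [gaussianPDF, gaussianPDF, ← ENNReal.ofReal_div_of_pos hpos,
      ENNReal.ofReal_rpow_of_pos (div_pos (gaussianPDFReal_pos m V y hV) hpos),
      ← ENNReal.ofReal_mul hpos.le, gaussianPDFReal_mul_div_rpow m m' hV,
      ENNReal.ofReal_mul (Real.exp_pos _).le]
  simp_rw [Pi.mul_apply, Pi.div_apply, hpoint]
  rw [lintegral_const_mul _ (measurable_gaussianPDFReal _ _).ennreal_ofReal,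
    lintegral_gaussianPDFReal_eq_one _ hV, mul_one]

theorem lintegral_rnDeriv_pi_gaussianReal_rpow {ι : Type*} [Fintype ι] (m m' : ι → ℝ)
    (hV : V ≠ 0) {l : ℝ} (hl : 0 ≤ l) :
    ∫⁻ x, (Measure.pi fun i => gaussianReal (m i) V).rnDeriv
        (Measure.pi fun i => gaussianReal (m' i) V) x ^ l
        ∂(Measure.pi fun i => gaussianReal (m' i) V)
      = ENNReal.ofReal (rexp (l * (l - 1) * ∑ i, (m i - m' i) ^ 2 / (2 * V))) := by
  rw [Measure.lintegral_rnDeriv_pi_rpow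
    (fun i => gaussianReal_absolutelyContinuous_gaussianReal _ _ hV) hl]
  simp_rw [lintegral_rnDeriv_gaussianReal_rpow _ _ hV]
  rw [← ENNReal.ofReal_prod_of_nonneg fun i _ => (Real.exp_pos _).le, ← Real.exp_sum,
    Finset.mul_sum]

end ProbabilityTheory

theorem gaussian_mechanism_general (k : ℕ) (Δ ρ : ℝ) (hΔ : 0 < Δ) (hρ : 0 < ρ)
    (v v' : Fin k → ℝ) (hsens : ∑ i, |v i - v' i| ≤ Δ)
    (μ ν : Measure (Fin k → ℝ))
    (hμ : μ = Measure.pi fun i => gaussianReal (v i) ((Δ ^ 2 / (2 * ρ)).toNNReal))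
    (hν : ν = Measure.pi fun i => gaussianReal (v' i) ((Δ ^ 2 / (2 * ρ)).toNNReal)) :
    μ ≪ ν ∧ ∀ l : ℝ, 1 < l →
      ∫⁻ x, (μ.rnDeriv ν x) ^ l ∂ν ≤ ENNReal.ofReal (Real.exp (l * (l - 1) * ρ)) := by
  set V := (Δ ^ 2 / (2 * ρ)).toNNReal
  have h2V : 2 * (V : ℝ) = Δ ^ 2 / ρ := by
    rw [Real.coe_toNNReal _ (by positivity)]
    field_simp
  have hV : V ≠ 0 := by
    rw [Ne, Real.toNNReal_eq_zero, not_le]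
    positivity
  have hsq : ∑ i, (v i - v' i) ^ 2 ≤ Δ ^ 2 :=
    calc ∑ i, (v i - v' i) ^ 2 = ∑ i, |v i - v' i| ^ 2 := by simp_rw [sq_abs]
      _ ≤ (∑ i, |v i - v' i|) ^ 2 := Finset.sum_sq_le_sq_sum_of_nonneg fun i _ => abs_nonneg _
      _ ≤ Δ ^ 2 := pow_le_pow_left₀ (Finset.sum_nonneg fun i _ => abs_nonneg _) hsens 2
  subst hμ hν
  refine ⟨Measure.absolutelyContinuous_pi
    fun i => gaussianReal_absolutelyContinuous_gaussianReal _ _ hV, fun l hl => ?_⟩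
  rw [lintegral_rnDeriv_pi_gaussianReal_rpow v v' hV (by linarith)]
  gcongr
  calc ∑ i, (v i - v' i) ^ 2 / (2 * V) = (∑ i, (v i - v' i) ^ 2) / (Δ ^ 2 / ρ) := by
        rw [← Finset.sum_div, h2V]
    _ ≤ Δ ^ 2 / (Δ ^ 2 / ρ) := by gcongr
    _ = ρ := by field_simp

/-- Gaussian mechanism: adding independent Gaussian noise of variance `Δ²/(2ρ)` to each
coordinate of a statistic with ℓ1-sensitivity at most `Δ` satisfies `ρ`-zero-concentrated
differential privacy, i.e. the Rényi divergence of order `l` between the two output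
distributions is at most `l · ρ` for every `l ∈ (1, ∞)`. -/
theorem gaussian_mechanism (k : ℕ) (hk : 0 < k) (Δ ρ : ℝ) (hΔ : 0 < Δ) (hρ : 0 < ρ)
    (v v' : Fin k → ℝ) (hsens : ∑ i, |v i - v' i| ≤ Δ)
    (μ ν : Measure (Fin k → ℝ))
    (hμ : μ = Measure.pi fun i => gaussianReal (v i) ((Δ ^ 2 / (2 * ρ)).toNNReal))
    (hν : ν = Measure.pi fun i => gaussianReal (v' i) ((Δ ^ 2 / (2 * ρ)).toNNReal)) :
    μ ≪ ν ∧ ∀ l : ℝ, 1 < l →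
      ∫⁻ x, (μ.rnDeriv ν x) ^ l ∂ν ≤ ENNReal.ofReal (Real.exp (l * (l - 1) * ρ)) :=
  gaussian_mechanism_general k Δ ρ hΔ hρ v v' hsens μ ν hμ hν
end

section
/- Let μ and ν be probability measures on a measurable space X with μ ≪ ν, let f : X → Y be a measurable function into a measurable space Y, and let λ > 1. Then Measure.map f μ ≪ Measure.map f ν and ∫⁻ ((Measure.map f μ).rnDeriv (Measure.map f ν))^λ d(Measure.map f ν) ≤ ∫⁻ (μ.rnDeriv ν)^λ dν. (Data-processing inequality for the λ-th moment of the likelihood ratio; it implies that Rényi divergence, and hence zero-concentrated differential privacy, is preserved under measurable post-processing.) -/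
/-!
Write `g` for the density of `f₊μ` with respect to `f₊ν` and `r` for that of `μ` with respect to
`ν`. Since `∫ g * h d(f₊ν) = ∫ h d(f₊μ) = ∫ r * (h ∘ f) dν`, taking `h = g ^ (λ - 1)` gives
`∫ g ^ λ d(f₊ν) = ∫ r * (g ∘ f) ^ (λ - 1) dν`, and Young's inequality with exponents `λ` and
`λ / (λ - 1)` bounds this by `λ⁻¹ ∫ r ^ λ dν + (1 - λ⁻¹) ∫ (g ∘ f) ^ λ dν`. The last integral is
the left-hand side again, so it can be cancelled once it is finite; this is arranged by running the
argument for the truncations `min g n` and passing to the limit by monotone convergence.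
-/

open MeasureTheory ENNReal

namespace ENNReal

lemma rpow_le_mul_rpow_sub_one {p : ℝ} (hp : 1 ≤ p) {a b : ℝ≥0∞} (hab : a ≤ b) :
    a ^ p ≤ b * a ^ (p - 1) :=
  calc a ^ p = a ^ ((1 : ℝ) + (p - 1)) := by rw [add_sub_cancel]
    _ = a * a ^ (p - 1) := by rw [rpow_add_of_nonneg _ _ zero_le_one (sub_nonneg.2 hp), rpow_one]
    _ ≤ b * a ^ (p - 1) := by gcongr

lemma iSup_min_natCast_rpow {p : ℝ} (hp : 0 < p) (a : ℝ≥0∞) :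
    ⨆ n : ℕ, min a n ^ p = a ^ p := by
  have h := (orderIsoRpow p hp).map_iSup fun n : ℕ => min a n
  simp only [orderIsoRpow_apply] at h
  rw [← h, ← inf_iSup_eq, iSup_natCast, inf_top_eq]

end ENNReal

section Young

variable {α : Type*} [MeasurableSpace α] {μ : Measure α}

lemma lintegral_rpow_le_of_le_lintegral_mul_rpow_sub_one {p q : ℝ} (hpq : p.HolderConjugate q)
    {r φ : α → ℝ≥0∞} (hr : AEMeasurable r μ) (hφ : AEMeasurable φ μ)
    (hfin : ∫⁻ x, φ x ^ p ∂μ ≠ ∞) (h : ∫⁻ x, φ x ^ p ∂μ ≤ ∫⁻ x, r x * φ x ^ (p - 1) ∂μ) :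
    ∫⁻ x, φ x ^ p ∂μ ≤ ∫⁻ x, r x ^ p ∂μ := by
  set I := ∫⁻ x, φ x ^ p ∂μ
  set J := ∫⁻ x, r x ^ p ∂μ
  set cp := ENNReal.ofReal p
  set cq := ENNReal.ofReal q
  have hcp : cp ≠ 0 := (ofReal_pos.2 hpq.pos).ne'
  have young (x : α) : r x * φ x ^ (p - 1) ≤ r x ^ p / cp + φ x ^ p / cq := by
    simpa only [← rpow_mul, hpq.sub_one_mul_conj] using young_inequality (r x) (φ x ^ (p - 1)) hpq
  have hI : I ≤ J / cp + I / cq := by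
    refine h.trans ((lintegral_mono young).trans_eq ?_)
    simp only [div_eq_mul_inv]
    rw [lintegral_add_left' ((hr.pow_const p).mul_const _),
      lintegral_mul_const'' _ (hr.pow_const p), lintegral_mul_const'' _ (hφ.pow_const p)]
  have hsplit : I = I / cp + I / cq := by
    rw [div_eq_mul_inv, div_eq_mul_inv, ← mul_add, hpq.inv_add_inv_ennreal, mul_one]
  have hcancel : I / cp ≤ J / cp :=
    (ENNReal.add_le_add_iff_right (div_ne_top hfin (ofReal_pos.2 hpq.symm.pos).ne')).1
      (hsplit.ge.trans hI)
  calc I = I / cp * cp := (ENNReal.div_mul_cancel hcp ofReal_ne_top).symm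
    _ ≤ J / cp * cp := by gcongr
    _ = J := ENNReal.div_mul_cancel hcp ofReal_ne_top

end Young

section Truncation

variable {α : Type*} [MeasurableSpace α] {μ : Measure α}

lemma lintegral_rpow_eq_iSup_lintegral_min_rpow {p : ℝ} (hp : 0 < p) {g : α → ℝ≥0∞}
    (hg : Measurable g) : ∫⁻ x, g x ^ p ∂μ = ⨆ n : ℕ, ∫⁻ x, min (g x) n ^ p ∂μ := by
  have hmono : Monotone fun (n : ℕ) x => min (g x) n ^ p := fun _ _ hmn _ =>
    rpow_le_rpow (min_le_min_left _ (Nat.cast_le.2 hmn)) hp.le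
  rw [← lintegral_iSup (fun n => (hg.min measurable_const).pow_const p) hmono]
  simp only [iSup_min_natCast_rpow hp]

end Truncation

section PushForward

variable {X Y : Type*} [MeasurableSpace X] [MeasurableSpace Y] {μ ν : Measure X} {f : X → Y}

lemma lintegral_rnDeriv_map_mul [μ.HaveLebesgueDecomposition ν]
    [(μ.map f).HaveLebesgueDecomposition (ν.map f)] (hac : μ ≪ ν) (hf : Measurable f)
    {h : Y → ℝ≥0∞} (hh : Measurable h) :
    ∫⁻ y, (μ.map f).rnDeriv (ν.map f) y * h y ∂(ν.map f) = ∫⁻ x, μ.rnDeriv ν x * h (f x) ∂ν := by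
  rw [lintegral_rnDeriv_mul (hac.map hf) hh.aemeasurable, lintegral_map hh hf]
  exact (lintegral_rnDeriv_mul hac (hh.comp hf).aemeasurable).symm

lemma lintegral_min_rnDeriv_map_rpow_le [IsFiniteMeasure ν] [μ.HaveLebesgueDecomposition ν]
    [(μ.map f).HaveLebesgueDecomposition (ν.map f)] (hac : μ ≪ ν) (hf : Measurable f)
    {p : ℝ} (hp : 1 < p) (n : ℕ) :
    ∫⁻ y, min ((μ.map f).rnDeriv (ν.map f) y) n ^ p ∂(ν.map f) ≤ ∫⁻ x, μ.rnDeriv ν x ^ p ∂ν := by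
  set g := (μ.map f).rnDeriv (ν.map f)
  have hφ : Measurable fun y => min (g y) n := (Measure.measurable_rnDeriv _ _).min measurable_const
  rw [lintegral_map (hφ.pow_const p) hf]
  refine lintegral_rpow_le_of_le_lintegral_mul_rpow_sub_one (.conjExponent hp)
    (Measure.measurable_rnDeriv μ ν).aemeasurable (hφ.comp hf).aemeasurable ?_ ?_
  · refine ne_top_of_le_ne_top (b := ∫⁻ _, (n : ℝ≥0∞) ^ p ∂ν) ?_ (lintegral_mono fun x => ?_)
    · rw [lintegral_const]
      exact mul_ne_top (rpow_ne_top_of_nonneg (by linarith) (natCast_ne_top n)) (measure_ne_top ν _)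
    · gcongr; exact min_le_right _ _
  · calc ∫⁻ x, min (g (f x)) n ^ p ∂ν = ∫⁻ y, min (g y) n ^ p ∂(ν.map f) :=
          (lintegral_map (hφ.pow_const p) hf).symm
      _ ≤ ∫⁻ y, g y * min (g y) n ^ (p - 1) ∂(ν.map f) :=
          lintegral_mono fun y => rpow_le_mul_rpow_sub_one hp.le (min_le_left _ _)
      _ = ∫⁻ x, μ.rnDeriv ν x * min (g (f x)) n ^ (p - 1) ∂ν :=
          lintegral_rnDeriv_map_mul hac hf (hφ.pow_const _)

end PushForward

/-- Data-processing inequality for the `l`-th moment of the likelihood ratio: the Rényi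
divergence of order `l ∈ (1, ∞)` (and hence zero-concentrated differential privacy) is
preserved under measurable post-processing. -/
theorem data_processing_renyi {X Y : Type*} [MeasurableSpace X] [MeasurableSpace Y]
    (μ ν : Measure X) [IsProbabilityMeasure μ] [IsProbabilityMeasure ν] (hac : μ ≪ ν)
    (f : X → Y) (hf : Measurable f) (l : ℝ) (hl : 1 < l) :
    Measure.map f μ ≪ Measure.map f ν ∧
      ∫⁻ y, ((Measure.map f μ).rnDeriv (Measure.map f ν) y) ^ l ∂(Measure.map f ν) ≤
        ∫⁻ x, (μ.rnDeriv ν x) ^ l ∂ν := by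
  refine ⟨hac.map hf, ?_⟩
  rw [lintegral_rpow_eq_iSup_lintegral_min_rpow (by linarith) (Measure.measurable_rnDeriv _ _)]
  exact iSup_le (lintegral_min_rnDeriv_map_rpow_le hac hf hl)
end

section
/- Let ι be a finite index type, and for each i ∈ ι let μ i and ν i be probability measures on a measurable space Ω i and let ε i ≥ 0 be such that μ i and ν i are (ε i, 0)-indistinguishable. Then the product measures Measure.pi μ and Measure.pi ν on Π i, Ω i are (∑ i, ε i, 0)-indistinguishable. (Composition: running finitely many independent ε_i-differentially-private mechanisms is (∑ ε_i)-differentially private.) -/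
open MeasureTheory Real

open Set in
lemma outer_pi_mono {ι : Type*} [Fintype ι] {α : ι → Type*}
    (m n : ∀ i, MeasureTheory.OuterMeasure (α i)) (h : ∀ i s, m i s ≤ n i s) :
    MeasureTheory.OuterMeasure.pi m ≤ MeasureTheory.OuterMeasure.pi n := by
  rw [MeasureTheory.OuterMeasure.le_pi]
  intro s _
  exact (MeasureTheory.OuterMeasure.pi_pi_le m s).trans
    (Finset.prod_le_prod' fun i _ => h i _)

lemma measure_pi_mono {ι : Type*} [Fintype ι] {α : ι → Type*} [∀ i, MeasurableSpace (α i)]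
    (μ ν : ∀ i, Measure (α i)) (h : ∀ i, μ i ≤ ν i) :
    Measure.pi μ ≤ Measure.pi ν := by
  refine Measure.le_iff.2 fun s hs => ?_
  rw [Measure.pi, Measure.pi, toMeasure_apply _ _ hs, toMeasure_apply _ _ hs]
  exact outer_pi_mono _ _ (fun i s => Measure.le_iff'.1 (h i) s) s

/-- Composition: running finitely many independent `ε i`-differentially-private mechanisms
is `(∑ i, ε i)`-differentially private. -/
theorem composition_pi {ι : Type*} [Fintype ι] {Ω : ι → Type*} [∀ i, MeasurableSpace (Ω i)]
    (μ ν : ∀ i, Measure (Ω i)) [∀ i, IsProbabilityMeasure (μ i)]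
    [∀ i, IsProbabilityMeasure (ν i)] (ε : ι → ℝ) (hε : ∀ i, 0 ≤ ε i)
    (h : ∀ i, Indist (μ i) (ν i) (ε i) 0) :
    Indist (Measure.pi μ) (Measure.pi ν) (∑ i, ε i) 0 := by
  set c : ι → ENNReal := fun i => ENNReal.ofReal (Real.exp (ε i)) with hc
  have hle : ∀ i, μ i ≤ c i • ν i := by
    intro i
    refine Measure.le_iff.2 fun s hs => ?_
    simpa using h i s hs
  haveI : ∀ i, IsFiniteMeasure (c i • ν i) := by
    intro i
    refine ⟨?_⟩
    simp only [Measure.smul_apply, smul_eq_mul]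
    exact ENNReal.mul_lt_top ENNReal.ofReal_lt_top (measure_lt_top _ _)
  have peq : Measure.pi (fun i => c i • ν i) = (∏ i, c i) • Measure.pi ν := by
    refine Measure.pi_eq fun s hs => ?_
    simp [Measure.pi_pi, Finset.prod_mul_distrib]
  intro S hS
  have h1 : Measure.pi μ S ≤ Measure.pi (fun i => c i • ν i) S :=
    Measure.le_iff'.1 (measure_pi_mono _ _ hle) S
  rw [peq] at h1
  simp only [Measure.smul_apply, smul_eq_mul] at h1
  have h2 : ∏ i, c i = ENNReal.ofReal (Real.exp (∑ i, ε i)) := by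
    rw [Real.exp_sum, ← ENNReal.ofReal_prod_of_nonneg]
    intro i _
    exact (Real.exp_pos _).le
  rw [h2] at h1
  simpa using h1
end

section
/- Let μ₁, ν₁ be probability measures on a measurable space X and μ₂, ν₂ be probability measures on a measurable space Y. Suppose μ₁ and ν₁ are (ε₁, δ₁)-indistinguishable and μ₂ and ν₂ are (ε₂, δ₂)-indistinguishable, with δ₁, δ₂ ≥ 0. Then the product measures μ₁.prod μ₂ and ν₁.prod ν₂ on X × Y are (ε₁ + ε₂, δ₁ + δ₂)-indistinguishable. (Composition for approximate differential privacy: running two independent mechanisms that are (ε₁, δ₁)-DP and (ε₂, δ₂)-DP is (ε₁ + ε₂, δ₁ + δ₂)-DP.) -/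
open MeasureTheory Real

/-!
Slice `S` along the first coordinate. Indistinguishability of `μ₂, ν₂` gives
`μ₂ Sₓ ≤ g x + δ₂` with `g x = min 1 (e^ε₂ ν₂ Sₓ)`. The truncation makes `g` a `[0,1]`-valued
function, and by the layer-cake formula indistinguishability of `μ₁, ν₁` passes from sets to
such functions: `∫ g dμ₁ ≤ e^ε₁ ∫ g dν₁ + δ₁`. Finally `∫ g dν₁ ≤ e^ε₂ (ν₁ × ν₂) S`.
-/

open Set

lemma lintegral_ofReal_eq_setLIntegral_Ioc_measure_lt {X : Type*} [MeasurableSpace X]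
    (κ : Measure X) {f : X → ℝ} (hf : Measurable f) (hf0 : 0 ≤ f) (hf1 : f ≤ 1) :
    ∫⁻ x, ENNReal.ofReal (f x) ∂κ = ∫⁻ t in Ioc 0 1, κ {x | t < f x} := by
  have hsupp : (fun t => κ {x | t < f x}).support ⊆ Iic 1 := fun t ht => by
    by_contra h
    have hempty : {x | t < f x} = ∅ :=
      eq_empty_of_forall_notMem fun x hx => h (hx.le.trans (hf1 x))
    simp [hempty] at ht
  rw [lintegral_eq_lintegral_meas_lt κ (ae_of_all _ hf0) hf.aemeasurable,
    ← setLIntegral_eq_of_support_subset hsupp, Measure.restrict_restrict measurableSet_Iic,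
    Iic_inter_Ioi]

theorem Indist.lintegral_le {X : Type*} [MeasurableSpace X] {μ ν : Measure X} {ε δ : ℝ}
    (h : Indist μ ν ε δ) {g : X → ENNReal} (hg : Measurable g) (hg1 : g ≤ 1) :
    ∫⁻ x, g x ∂μ ≤ ENNReal.ofReal (exp ε) * ∫⁻ x, g x ∂ν + ENNReal.ofReal δ := by
  set f : X → ℝ := fun x => (g x).toReal
  have hf : Measurable f := hg.ennreal_toReal
  have hf1 : f ≤ 1 := fun x =>
    ENNReal.toReal_le_of_le_ofReal zero_le_one (by simpa using hg1 x)
  have hgf (κ : Measure X) : ∫⁻ x, g x ∂κ = ∫⁻ t in Ioc 0 1, κ {x | t < f x} := by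
    rw [← lintegral_ofReal_eq_setLIntegral_Ioc_measure_lt κ hf
      (fun _ => ENNReal.toReal_nonneg) hf1]
    refine lintegral_congr fun x => (ENNReal.ofReal_toReal ?_).symm
    exact ne_top_of_le_ne_top ENNReal.one_ne_top (hg1 x)
  rw [hgf, hgf]
  calc ∫⁻ t in Ioc 0 1, μ {x | t < f x}
      ≤ ∫⁻ t in Ioc 0 1, (ENNReal.ofReal (exp ε) * ν {x | t < f x} + ENNReal.ofReal δ) :=
        lintegral_mono fun t => h _ (measurableSet_lt measurable_const hf)
    _ = ENNReal.ofReal (exp ε) * (∫⁻ t in Ioc 0 1, ν {x | t < f x}) + ENNReal.ofReal δ := by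
        rw [lintegral_add_right _ measurable_const,
          lintegral_const_mul' _ _ ENNReal.ofReal_ne_top, setLIntegral_const, Real.volume_Ioc]
        norm_num

theorem Indist.apply_le_min_one_add {X : Type*} [MeasurableSpace X] {μ ν : Measure X}
    [IsZeroOrProbabilityMeasure μ] {ε δ : ℝ} (h : Indist μ ν ε δ) {S : Set X}
    (hS : MeasurableSet S) :
    μ S ≤ min 1 (ENNReal.ofReal (exp ε) * ν S) + ENNReal.ofReal δ := by
  rcases min_choice 1 (ENNReal.ofReal (exp ε) * ν S) with hmin | hmin <;> rw [hmin]
  · exact le_add_right prob_le_one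
  · exact h S hS

theorem composition_prod_general {X Y : Type*} [MeasurableSpace X] [MeasurableSpace Y]
    (μ₁ ν₁ : Measure X) (μ₂ ν₂ : Measure Y)
    [IsProbabilityMeasure μ₁]
    [IsProbabilityMeasure μ₂] [IsProbabilityMeasure ν₂]
    (ε₁ ε₂ δ₁ δ₂ : ℝ) (hδ₁ : 0 ≤ δ₁) (hδ₂ : 0 ≤ δ₂)
    (h₁ : Indist μ₁ ν₁ ε₁ δ₁) (h₂ : Indist μ₂ ν₂ ε₂ δ₂) :
    Indist (μ₁.prod μ₂) (ν₁.prod ν₂) (ε₁ + ε₂) (δ₁ + δ₂) := by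
  intro S hS
  set e₁ := ENNReal.ofReal (exp ε₁)
  set e₂ := ENNReal.ofReal (exp ε₂)
  set g : X → ENNReal := fun x => min 1 (e₂ * ν₂ (Prod.mk x ⁻¹' S))
  have hg : Measurable g :=
    measurable_const.min (measurable_const.mul (measurable_measure_prodMk_left hS))
  calc (μ₁.prod μ₂) S = ∫⁻ x, μ₂ (Prod.mk x ⁻¹' S) ∂μ₁ := Measure.prod_apply hS
    _ ≤ ∫⁻ x, (g x + ENNReal.ofReal δ₂) ∂μ₁ :=
        lintegral_mono fun x => h₂.apply_le_min_one_add (measurable_prodMk_left hS)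
    _ = ∫⁻ x, g x ∂μ₁ + ENNReal.ofReal δ₂ := by
        rw [lintegral_add_right _ measurable_const, lintegral_const, measure_univ, mul_one]
    _ ≤ e₁ * ∫⁻ x, g x ∂ν₁ + ENNReal.ofReal δ₁ + ENNReal.ofReal δ₂ := by
        gcongr
        exact h₁.lintegral_le hg fun x => min_le_left _ _
    _ ≤ e₁ * (∫⁻ x, e₂ * ν₂ (Prod.mk x ⁻¹' S) ∂ν₁) + ENNReal.ofReal δ₁
          + ENNReal.ofReal δ₂ := by
        gcongr with x
        exact min_le_right _ _
    _ = ENNReal.ofReal (exp (ε₁ + ε₂)) * (ν₁.prod ν₂) S + ENNReal.ofReal (δ₁ + δ₂) := by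
        rw [lintegral_const_mul' _ _ ENNReal.ofReal_ne_top, ← Measure.prod_apply hS, exp_add,
          ENNReal.ofReal_mul (exp_nonneg _), mul_assoc, ENNReal.ofReal_add hδ₁ hδ₂, add_assoc]

/-- Composition for approximate differential privacy: running two independent mechanisms
that are `(ε₁, δ₁)`-DP and `(ε₂, δ₂)`-DP is `(ε₁ + ε₂, δ₁ + δ₂)`-DP. -/
theorem composition_prod {X Y : Type*} [MeasurableSpace X] [MeasurableSpace Y]
    (μ₁ ν₁ : Measure X) (μ₂ ν₂ : Measure Y)
    [IsProbabilityMeasure μ₁] [IsProbabilityMeasure ν₁]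
    [IsProbabilityMeasure μ₂] [IsProbabilityMeasure ν₂]
    (ε₁ ε₂ δ₁ δ₂ : ℝ) (hδ₁ : 0 ≤ δ₁) (hδ₂ : 0 ≤ δ₂)
    (h₁ : Indist μ₁ ν₁ ε₁ δ₁) (h₂ : Indist μ₂ ν₂ ε₂ δ₂) :
    Indist (μ₁.prod μ₂) (ν₁.prod ν₂) (ε₁ + ε₂) (δ₁ + δ₂) :=
  composition_prod_general μ₁ ν₁ μ₂ ν₂ ε₁ ε₂ δ₁ δ₂ hδ₁ hδ₂ h₁ h₂
end

section
/- Let μ₁, ν₁ be probability measures on a measurable space X with μ₁ ≪ ν₁, let μ₂, ν₂ be probability measures on a measurable space Y with μ₂ ≪ ν₂, and let λ > 1. Then μ₁.prod μ₂ ≪ ν₁.prod ν₂ and ∫⁻ ((μ₁.prod μ₂).rnDeriv (ν₁.prod ν₂))^λ d(ν₁.prod ν₂) = (∫⁻ (μ₁.rnDeriv ν₁)^λ dν₁) · (∫⁻ (μ₂.rnDeriv ν₂)^λ dν₂). (Additivity of Rényi divergence under independent products; this yields the composition rule for zero-concentrated differential privacy: the composition of a ρ₁-zCDP and a ρ₂-zCDP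 mechanism is (ρ₁ + ρ₂)-zCDP.) -/
open MeasureTheory Real
open scoped ENNReal

lemma withDensity_prod_aux {X Y : Type*} [MeasurableSpace X] [MeasurableSpace Y]
    (μ₁ ν₁ : Measure X) (μ₂ ν₂ : Measure Y) [SigmaFinite μ₁] [SigmaFinite μ₂] [SFinite ν₁] [SFinite ν₂]
    {f : X → ℝ≥0∞} {g : Y → ℝ≥0∞} (hf : Measurable f) (hg : Measurable g)
    (e₁ : μ₁ = ν₁.withDensity f) (e₂ : μ₂ = ν₂.withDensity g) :
    μ₁.prod μ₂ = (ν₁.prod ν₂).withDensity (fun z => f z.1 * g z.2) := by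
  refine Measure.prod_eq fun s t hs ht => ?_
  rw [e₁, e₂, withDensity_apply _ hs, withDensity_apply _ ht,
    withDensity_apply _ (hs.prod ht), ← Measure.prod_restrict,
    lintegral_prod_mul hf.aemeasurable hg.aemeasurable]

/-- Additivity of Rényi divergence under independent products: this yields the composition
rule for zero-concentrated differential privacy (a `ρ₁`-zCDP mechanism composed with a
`ρ₂`-zCDP mechanism is `(ρ₁ + ρ₂)`-zCDP). -/
theorem renyi_prod {X Y : Type*} [MeasurableSpace X] [MeasurableSpace Y]
    (μ₁ ν₁ : Measure X) (μ₂ ν₂ : Measure Y)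
    [IsProbabilityMeasure μ₁] [IsProbabilityMeasure ν₁]
    [IsProbabilityMeasure μ₂] [IsProbabilityMeasure ν₂]
    (h₁ : μ₁ ≪ ν₁) (h₂ : μ₂ ≪ ν₂) (l : ℝ) (hl : 1 < l) :
    μ₁.prod μ₂ ≪ ν₁.prod ν₂ ∧
      ∫⁻ z, ((μ₁.prod μ₂).rnDeriv (ν₁.prod ν₂) z) ^ l ∂(ν₁.prod ν₂) =
        (∫⁻ x, (μ₁.rnDeriv ν₁ x) ^ l ∂ν₁) * ∫⁻ y, (μ₂.rnDeriv ν₂ y) ^ l ∂ν₂ := by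
  have hm₁ := Measure.measurable_rnDeriv μ₁ ν₁
  have hm₂ := Measure.measurable_rnDeriv μ₂ ν₂
  have hw₁ : ν₁.withDensity (μ₁.rnDeriv ν₁) = μ₁ := Measure.withDensity_rnDeriv_eq _ _ h₁
  have hw₂ : ν₂.withDensity (μ₂.rnDeriv ν₂) = μ₂ := Measure.withDensity_rnDeriv_eq _ _ h₂
  have hprod : μ₁.prod μ₂ =
      (ν₁.prod ν₂).withDensity (fun z => μ₁.rnDeriv ν₁ z.1 * μ₂.rnDeriv ν₂ z.2) := by
    exact withDensity_prod_aux μ₁ ν₁ μ₂ ν₂ hm₁ hm₂ hw₁.symm hw₂.symm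
  have hac : μ₁.prod μ₂ ≪ ν₁.prod ν₂ := by
    rw [hprod]; exact withDensity_absolutelyContinuous _ _
  refine ⟨hac, ?_⟩
  have hrn : (μ₁.prod μ₂).rnDeriv (ν₁.prod ν₂) =ᵐ[ν₁.prod ν₂]
      fun z => μ₁.rnDeriv ν₁ z.1 * μ₂.rnDeriv ν₂ z.2 := by
    rw [hprod]
    exact Measure.rnDeriv_withDensity _ ((hm₁.comp measurable_fst).mul
      (hm₂.comp measurable_snd))
  calc ∫⁻ z, ((μ₁.prod μ₂).rnDeriv (ν₁.prod ν₂) z) ^ l ∂(ν₁.prod ν₂)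
      = ∫⁻ z, (μ₁.rnDeriv ν₁ z.1) ^ l * (μ₂.rnDeriv ν₂ z.2) ^ l ∂(ν₁.prod ν₂) := by
        refine lintegral_congr_ae ?_
        filter_upwards [hrn] with z hz
        rw [hz, ENNReal.mul_rpow_of_nonneg _ _ (by linarith)]
    _ = _ := lintegral_prod_mul ((hm₁.pow_const l).aemeasurable)
        ((hm₂.pow_const l).aemeasurable)
end

section
/- Let μ and ν be probability measures on a measurable space with μ ≪ ν, let ρ > 0 and δ ∈ (0, 1), and suppose that for every λ > 1, ∫⁻ (μ.rnDeriv ν)^λ dν ≤ exp(λ · (λ − 1) · ρ) (i.e. the Rényi divergence of every order λ ∈ (1, ∞) between μ and ν is at most λρ). Then for every measurable set S, μ(S) ≤ exp(ρ + 2·√(ρ · log(1/δ))) · ν(S) + δ. (Conversion from zero-concentrated differential privacy to approximate differential privacy: any ρ-zCDP algorithm is (ρ + 2√(ρ log(1/δ)), δ)-DP for every δ > 0.) -/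
/-!
Write `f = dμ/dν` and `A = {f > e^ε}`. Off `A`, `μ ≤ e^ε ν`; on `A`, Markov's inequality for
`f^(l-1)` under `μ` bounds `μ A` by `e^(-(l-1)ε) ∫ f^l dν ≤ e^((l-1)(lρ - ε))`. The order
`l = 1 + √(L/ρ)`, `L = log (1/δ)`, makes this exponent `-L`, i.e. `μ A ≤ δ`, for
`ε = ρ + 2√(ρL)`.
-/

open MeasureTheory Real
open scoped ENNReal

theorem ENNReal.rpow_sub_one_mul_le_rpow {c x : ℝ≥0∞} {l : ℝ} (hl : 1 ≤ l) (hcx : c ≤ x) :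
    c ^ (l - 1) * x ≤ x ^ l :=
  calc c ^ (l - 1) * x ≤ x ^ (l - 1) * x ^ (1 : ℝ) := by
        rw [ENNReal.rpow_one]; gcongr
    _ = x ^ l := by rw [← ENNReal.rpow_add_of_nonneg _ _ (by linarith) zero_le_one, sub_add_cancel]

namespace MeasureTheory.Measure

variable {α : Type*} [MeasurableSpace α] {μ ν : Measure α} [μ.HaveLebesgueDecomposition ν]

theorem rpow_sub_one_mul_measure_rnDeriv_gt_le (hμν : μ ≪ ν) (c : ℝ≥0∞) {l : ℝ} (hl : 1 ≤ l) :
    c ^ (l - 1) * μ {x | c < μ.rnDeriv ν x} ≤ ∫⁻ x, μ.rnDeriv ν x ^ l ∂ν := by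
  have hA : MeasurableSet {x | c < μ.rnDeriv ν x} := measurableSet_lt measurable_const (by fun_prop)
  calc c ^ (l - 1) * μ {x | c < μ.rnDeriv ν x}
      = ∫⁻ x in {x | c < μ.rnDeriv ν x}, c ^ (l - 1) * μ.rnDeriv ν x ∂ν := by
        rw [lintegral_const_mul _ (by fun_prop), setLIntegral_rnDeriv' hμν hA]
    _ ≤ ∫⁻ x in {x | c < μ.rnDeriv ν x}, μ.rnDeriv ν x ^ l ∂ν :=
        setLIntegral_mono (by fun_prop) fun x hx ↦ ENNReal.rpow_sub_one_mul_le_rpow hl hx.le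
    _ ≤ ∫⁻ x, μ.rnDeriv ν x ^ l ∂ν := setLIntegral_le_lintegral _ _

theorem measure_le_mul_add_measure_rnDeriv_gt (hμν : μ ≪ ν) (c : ℝ≥0∞) {S : Set α}
    (hS : MeasurableSet S) : μ S ≤ c * ν S + μ {x | c < μ.rnDeriv ν x} := by
  have hA : MeasurableSet {x | c < μ.rnDeriv ν x} := measurableSet_lt measurable_const (by fun_prop)
  have hSA : μ (S \ {x | c < μ.rnDeriv ν x}) ≤ c * ν S :=
    calc μ (S \ {x | c < μ.rnDeriv ν x})
        = ∫⁻ x in S \ {x | c < μ.rnDeriv ν x}, μ.rnDeriv ν x ∂ν :=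
          (setLIntegral_rnDeriv' hμν (hS.diff hA)).symm
      _ ≤ ∫⁻ _ in S \ {x | c < μ.rnDeriv ν x}, c ∂ν :=
          setLIntegral_mono measurable_const fun x hx ↦ not_lt.mp hx.2
      _ ≤ c * ν S := by
          rw [setLIntegral_const]; gcongr; exact Set.sdiff_subset
  calc μ S = μ (S \ {x | c < μ.rnDeriv ν x}) + μ (S ∩ {x | c < μ.rnDeriv ν x}) := by
        rw [add_comm, measure_inter_add_sdiff S hA]
    _ ≤ c * ν S + μ {x | c < μ.rnDeriv ν x} := add_le_add hSA (measure_mono Set.inter_subset_right)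

theorem measure_le_exp_mul_add_of_lintegral_rnDeriv_rpow_le (hμν : μ ≪ ν) {l D : ℝ} (hl : 1 ≤ l)
    (hD : ∫⁻ x, μ.rnDeriv ν x ^ l ∂ν ≤ ENNReal.ofReal (exp ((l - 1) * D))) (ε : ℝ) {S : Set α}
    (hS : MeasurableSet S) :
    μ S ≤ ENNReal.ofReal (exp ε) * ν S + ENNReal.ofReal (exp ((l - 1) * (D - ε))) := by
  refine (measure_le_mul_add_measure_rnDeriv_gt hμν _ hS).trans (add_le_add le_rfl ?_)
  have hc : ENNReal.ofReal (exp ε) ^ (l - 1) = ENNReal.ofReal (exp ((l - 1) * ε)) := by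
    rw [ENNReal.ofReal_rpow_of_pos (exp_pos ε), ← exp_mul, mul_comm]
  have hc₀ : ENNReal.ofReal (exp ((l - 1) * ε)) ≠ 0 := (ENNReal.ofReal_pos.2 (exp_pos _)).ne'
  calc μ {x | ENNReal.ofReal (exp ε) < μ.rnDeriv ν x}
      ≤ ENNReal.ofReal (exp ((l - 1) * D)) / ENNReal.ofReal (exp ((l - 1) * ε)) := by
        rw [ENNReal.le_div_iff_mul_le (.inl hc₀) (.inl ENNReal.ofReal_ne_top), mul_comm, ← hc]
        exact (rpow_sub_one_mul_measure_rnDeriv_gt_le hμν _ hl).trans hD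
    _ = ENNReal.ofReal (exp ((l - 1) * (D - ε))) := by
        rw [← ENNReal.ofReal_div_of_pos (exp_pos _), ← exp_sub, mul_sub]

end MeasureTheory.Measure

/-- Conversion from zero-concentrated to approximate differential privacy: if the Rényi
divergence of every order `l ∈ (1, ∞)` between `μ` and `ν` is at most `l · ρ`, then for
every `δ ∈ (0, 1)` and every measurable set `S`,
`μ S ≤ exp (ρ + 2√(ρ log(1/δ))) * ν S + δ`. -/
theorem zcdp_to_approx_dp {X : Type*} [MeasurableSpace X] (μ ν : Measure X)
    [IsProbabilityMeasure μ] [IsProbabilityMeasure ν] (hac : μ ≪ ν)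
    (ρ δ : ℝ) (hρ : 0 < ρ) (hδ₀ : 0 < δ) (hδ₁ : δ < 1)
    (h : ∀ l : ℝ, 1 < l →
      ∫⁻ x, (μ.rnDeriv ν x) ^ l ∂ν ≤ ENNReal.ofReal (Real.exp (l * (l - 1) * ρ))) :
    ∀ S : Set X, MeasurableSet S →
      μ S ≤ ENNReal.ofReal (Real.exp (ρ + 2 * Real.sqrt (ρ * Real.log (1 / δ)))) * ν S +
        ENNReal.ofReal δ := by
  intro S hS
  set L := Real.log (1 / δ)
  have hL : 0 < L := Real.log_pos ((one_lt_div hδ₀).2 hδ₁)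
  have hs : 0 < √(ρ * L) := Real.sqrt_pos.2 (mul_pos hρ hL)
  set l := 1 + √(ρ * L) / ρ
  have hl : 1 < l := lt_add_of_pos_right 1 (div_pos hs hρ)
  have hexponent : (l - 1) * (l * ρ - (ρ + 2 * √(ρ * L))) = -L := by
    have hsq : √(ρ * L) ^ 2 = ρ * L := Real.sq_sqrt (mul_pos hρ hL).le
    simp only [l]
    field_simp
    linear_combination -hsq
  have hrenyi : ∫⁻ x, μ.rnDeriv ν x ^ l ∂ν ≤ ENNReal.ofReal (exp ((l - 1) * (l * ρ))) :=
    (h l hl).trans_eq (by rw [mul_comm l, mul_assoc])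
  convert Measure.measure_le_exp_mul_add_of_lintegral_rnDeriv_rpow_le hac hl.le hrenyi _ hS
  rw [hexponent, Real.exp_neg, Real.exp_log (one_div_pos.2 hδ₀), one_div, inv_inv]
end

section
/- Let n, t, m be positive natural numbers and ε > 0, and let β : ℕ → Fin m be a binning function assigning each degree value to one of m histogram bins. Let U be a finite subset of Fin n (the set of users), let k ∈ U, and let U' = U.erase k (node-neighboring: the second dataset is obtained by removing user k). For each week j : Fin t let d j : Fin n → ℕ give the ARP degree of each user in week j. Define the histograms H : Fin t → Fin m → ℝ and H' : Fin t → Fin m → ℝ by H j b = card {u ∈ U | β (d j u) = b} and H' j b = card {u ∈ U' | β (d j u) = b}. Let L be the product measure on Fin t → Fin m → ℝ whose t·m coordinates are i.i.d. Lap(t/ε), and let P : (Fin t → Fin m → ℝ) → (Fin t → Fin m → ℝ) be any measurable function (the threshold-at-zero-then-round post-processing applied to every bin). Then the pushforward of L under y ↦ P(H + y) and the pushforward of L under y ↦ P(H' + y) are (ε, 0)-indistinguishable. (The histogram-based approach satisfies ε-node-differential privacy.) -/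
/-!
Removing user `k` changes the histogram of every week by a unit vector in a single bin, so
`H = H' + c` with `‖c‖₁ = t`. Translating `Lap(b)` by `a` multiplies its density by at most
`exp (|a| / b)`, hence translating the product noise by `c` is dominated by
`exp (‖c‖₁ / b) = exp ε` times the noise itself; this domination survives any measurable
post-processing.
-/

open MeasureTheory Real

/-- The weekly degree histogram: for week `j` and bin `b`, the number of users in `U`
whose degree in week `j` falls into bin `b` under the binning function `β`. -/
def degreeHistogram {n t m : ℕ} (β : ℕ → Fin m) (U : Finset (Fin n))
    (d : Fin t → Fin n → ℕ) : Fin t → Fin m → ℝ :=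
  fun j b => ((U.filter fun u => β (d j u) = b).card : ℝ)

open scoped ENNReal

namespace MeasureTheory.Measure

theorem sigmaFinite_smul_of_ne_top {α : Type*} [MeasurableSpace α] (μ : Measure α)
    [SigmaFinite μ] {c : ℝ≥0∞} (hc : c ≠ ∞) : SigmaFinite (c • μ) := by
  rw [← ENNReal.coe_toNNReal hc, ← ENNReal.smul_def]
  infer_instance

section Pi

variable {ι : Type*} [Fintype ι] {α : ι → Type*} [∀ i, MeasurableSpace (α i)]

theorem pi_mono {μ ν : ∀ i, Measure (α i)} (h : ∀ i, μ i ≤ ν i) :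
    Measure.pi μ ≤ Measure.pi ν := by
  refine le_iff.2 fun s hs => ?_
  rw [Measure.pi, Measure.pi, toMeasure_apply _ _ hs, toMeasure_apply _ _ hs]
  refine OuterMeasure.le_boundedBy.2 (fun t => ?_) s
  exact (OuterMeasure.boundedBy_le t).trans <|
    Finset.prod_le_prod' fun i _ => le_iff'.1 (h i) _

theorem pi_smul {K : ι → ℝ≥0∞} (hK : ∀ i, K i ≠ ∞) (μ : ∀ i, Measure (α i))
    [∀ i, SigmaFinite (μ i)] :
    Measure.pi (fun i => K i • μ i) = (∏ i, K i) • Measure.pi μ := by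
  have (i : ι) := sigmaFinite_smul_of_ne_top (μ i) (hK i)
  refine pi_eq fun s hs => ?_
  simp only [smul_apply, smul_eq_mul, pi_pi, Finset.prod_mul_distrib]

theorem pi_map_le_smul {μ : ∀ i, Measure (α i)} [∀ i, SigmaFinite (μ i)]
    {f : ∀ i, α i → α i} (hf : ∀ i, AEMeasurable (f i) (μ i)) {K : ι → ℝ≥0∞}
    (hK : ∀ i, K i ≠ ∞) (h : ∀ i, (μ i).map (f i) ≤ K i • μ i) :
    (Measure.pi μ).map (fun x i => f i (x i)) ≤ (∏ i, K i) • Measure.pi μ := by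
  have (i : ι) := sigmaFinite_smul_of_ne_top (μ i) (hK i)
  have (i : ι) : SigmaFinite ((μ i).map (f i)) := sigmaFinite_of_le _ (h i)
  rw [pi_map_pi hf, ← pi_smul hK]
  exact pi_mono h

theorem pi_map_const_add_le_exp_smul [∀ i, Add (α i)] [∀ i, MeasurableAdd (α i)]
    {μ : ∀ i, Measure (α i)} [∀ i, SigmaFinite (μ i)] (a : ∀ i, α i) (c : ι → ℝ)
    (h : ∀ i, (μ i).map (a i + ·) ≤ ENNReal.ofReal (exp (c i)) • μ i) :
    (Measure.pi μ).map (a + ·) ≤ ENNReal.ofReal (exp (∑ i, c i)) • Measure.pi μ := by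
  rw [exp_sum, ENNReal.ofReal_prod_of_nonneg fun i _ => (exp_pos _).le]
  exact pi_map_le_smul (fun i => (measurable_const_add (a i)).aemeasurable)
    (fun _ => ENNReal.ofReal_ne_top) h

end Pi

theorem map_const_add_withDensity {G : Type*} [MeasurableSpace G] [AddGroup G] [MeasurableAdd G]
    (μ : Measure G) [μ.IsAddLeftInvariant] {g : G → ℝ≥0∞} (hg : Measurable g) (a : G) :
    (μ.withDensity g).map (a + ·) = μ.withDensity fun y => g (-a + y) := by
  ext s hs
  rw [map_apply (measurable_const_add a) hs, withDensity_apply _ (measurable_const_add a hs),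
    withDensity_apply _ hs]
  conv_rhs => rw [← map_add_left_eq_self μ a]
  rw [setLIntegral_map hs (by fun_prop) (measurable_const_add a)]
  simp only [neg_add_cancel_left]

end MeasureTheory.Measure

instance (b : ℝ) : SigmaFinite (laplaceMeasure b) := by
  unfold laplaceMeasure
  infer_instance

theorem laplace_density_shift_le {b : ℝ} (hb : 0 < b) (a y : ℝ) :
    (2 * b)⁻¹ * exp (-|-a + y| / b) ≤ exp (|a| / b) * ((2 * b)⁻¹ * exp (-|y| / b)) := by
  rw [mul_left_comm, ← exp_add, neg_add_eq_sub]
  gcongr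
  rw [← add_div, div_le_div_iff_of_pos_right hb]
  linarith [abs_sub_abs_le_abs_sub y a]

theorem laplaceMeasure_map_const_add_le {b : ℝ} (hb : 0 < b) (a : ℝ) :
    (laplaceMeasure b).map (a + ·) ≤ ENNReal.ofReal (exp (|a| / b)) • laplaceMeasure b := by
  rw [laplaceMeasure, Measure.map_const_add_withDensity _ (by fun_prop),
    ← withDensity_smul _ (by fun_prop)]
  refine withDensity_mono (ae_of_all _ fun y => ?_)
  simp only [Pi.smul_apply, smul_eq_mul, ← ENNReal.ofReal_mul (exp_pos _).le]
  exact ENNReal.ofReal_le_ofReal (laplace_density_shift_le hb a y)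

theorem pi_laplaceMeasure_map_const_add_le {ι : Type*} [Fintype ι] {b : ℝ} (hb : 0 < b)
    (a : ι → ℝ) :
    (Measure.pi fun _ : ι => laplaceMeasure b).map (a + ·) ≤
      ENNReal.ofReal (exp (∑ i, |a i| / b)) • Measure.pi fun _ : ι => laplaceMeasure b :=
  Measure.pi_map_const_add_le_exp_smul a _ fun i => laplaceMeasure_map_const_add_le hb (a i)

theorem Indist.map_of_le_smul {X Y : Type*} [MeasurableSpace X] [MeasurableSpace Y]
    {μ ν : Measure X} {ε : ℝ} (h : μ ≤ ENNReal.ofReal (exp ε) • ν) {f : X → Y}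
    (hf : Measurable f) : Indist (μ.map f) (ν.map f) ε 0 := by
  intro S hS
  rw [Measure.map_apply hf hS, Measure.map_apply hf hS, ENNReal.ofReal_zero, add_zero]
  exact Measure.le_iff'.1 h _

theorem degreeHistogram_eq_erase_add {n t m : ℕ} (β : ℕ → Fin m) {U : Finset (Fin n)}
    {k : Fin n} (hk : k ∈ U) (d : Fin t → Fin n → ℕ) :
    degreeHistogram β U d =
      degreeHistogram β (U.erase k) d + fun j => Pi.single (β (d j k)) 1 := by
  funext j b
  simp only [degreeHistogram, Pi.add_apply, Finset.filter_erase]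
  by_cases h : β (d j k) = b
  · subst h
    have hk' : k ∈ U.filter fun u => β (d j u) = β (d j k) := Finset.mem_filter.2 ⟨hk, rfl⟩
    rw [Finset.card_erase_of_mem hk', Nat.cast_sub (Finset.card_pos.2 ⟨k, hk'⟩)]
    simp
  · rw [Finset.erase_eq_of_notMem (by simp [h]), Pi.single_eq_of_ne' h, add_zero]

theorem histogram_approach_node_dp_general (n t m : ℕ) (ht : 0 < t)
    (ε : ℝ) (hε : 0 < ε) (β : ℕ → Fin m) (U : Finset (Fin n)) (k : Fin n) (hk : k ∈ U)
    (d : Fin t → Fin n → ℕ)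
    (P : (Fin t → Fin m → ℝ) → (Fin t → Fin m → ℝ)) (hP : Measurable P) :
    Indist
      (Measure.map (fun y => P (degreeHistogram β U d + y))
        (Measure.pi fun _ : Fin t => Measure.pi fun _ : Fin m => laplaceMeasure ((t : ℝ) / ε)))
      (Measure.map (fun y => P (degreeHistogram β (U.erase k) d + y))
        (Measure.pi fun _ : Fin t => Measure.pi fun _ : Fin m => laplaceMeasure ((t : ℝ) / ε)))
      ε 0 := by
  set c : Fin t → Fin m → ℝ := fun j => Pi.single (β (d j k)) 1
  have hb : 0 < (t : ℝ) / ε := by positivity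
  have hshift := Measure.pi_map_const_add_le_exp_smul c _ fun j =>
    pi_laplaceMeasure_map_const_add_le hb (c j)
  have hrow (j : Fin t) : ∑ i, |c j i| = 1 := by simp [c, Pi.single_apply, apply_ite abs]
  have hsensitivity : ∑ j, ∑ i, |c j i| / (t / ε) = ε := by
    simp_rw [← Finset.sum_div, hrow, Finset.sum_const, Finset.card_univ, Fintype.card_fin,
      nsmul_eq_mul, mul_one]
    field_simp
  rw [hsensitivity] at hshift
  have hcomp : (fun y => P (degreeHistogram β U d + y)) =
      (fun y => P (degreeHistogram β (U.erase k) d + y)) ∘ (c + ·) := by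
    funext y
    simp only [Function.comp_apply, degreeHistogram_eq_erase_add β hk d, add_assoc, c]
  rw [hcomp, ← Measure.map_map (by fun_prop) (measurable_const_add c)]
  exact Indist.map_of_le_smul hshift (by fun_prop)

/-- The histogram-based approach satisfies `ε`-node-differential privacy: on
node-neighboring user sets (one user removed), releasing the weekly degree histograms
perturbed by i.i.d. `Lap(t/ε)` noise in every bin, followed by any measurable
post-processing `P`, is `(ε, 0)`-indistinguishable. -/
theorem histogram_approach_node_dp (n t m : ℕ) (hn : 0 < n) (ht : 0 < t) (hm : 0 < m)
    (ε : ℝ) (hε : 0 < ε) (β : ℕ → Fin m) (U : Finset (Fin n)) (k : Fin n) (hk : k ∈ U)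
    (d : Fin t → Fin n → ℕ)
    (P : (Fin t → Fin m → ℝ) → (Fin t → Fin m → ℝ)) (hP : Measurable P) :
    Indist
      (Measure.map (fun y => P (degreeHistogram β U d + y))
        (Measure.pi fun _ : Fin t => Measure.pi fun _ : Fin m => laplaceMeasure ((t : ℝ) / ε)))
      (Measure.map (fun y => P (degreeHistogram β (U.erase k) d + y))
        (Measure.pi fun _ : Fin t => Measure.pi fun _ : Fin m => laplaceMeasure ((t : ℝ) / ε)))
      ε 0 :=
  histogram_approach_node_dp_general n t m ht ε hε β U k hk d P hP
end

section
/- Let n, t be positive natural numbers, ε > 0 and δ ∈ (0, 1), and set ρ = (√(log(1/δ) + ε) − √(log(1/δ)))². For each j : Fin t let V j and V' j be finite subsets of (Fin n) × (Fin n) (the directed ARP-request graphs of week j), and suppose there exists a single ordered pair e : (Fin n) × (Fin n) such that for every j, V j and V' j agree on every pair other than e (edge-neighboring). Define D(V) : Fin t → ℝ by D(V) j = card(V j), and similarly D(V'). Let G be the product measure on Fin t → ℝ whose coordinates are i.i.d. Gaussian with mean 0 and variance t/(2ρ), and let P : (Fin t → ℝ) → (Fin t → ℝ) be any measurable function (the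 threshold-at-zero-then-round post-processing). Then the pushforward of G under y ↦ P(D(V) + y) and the pushforward of G under y ↦ P(D(V') + y) are (ε, δ)-indistinguishable. (The naïve-δ approach satisfies (ε, δ)-edge-differential privacy.) -/
/-!
Both releases are post-processings of the product Gaussians `N(D(V), v)^t` and `N(D(V'), v)^t`
with `v = t / (2ρ)`, so it suffices to compare those. With `Δ = D(V) - D(V')`, their density
ratio is `exp ℓ` for the privacy loss `ℓ x = (⟨Δ, x - D(V)⟩ + ‖Δ‖² / 2) / v`. Each weekly count
moves by at most one, so `‖Δ‖² ≤ t = 2vρ`; as `ε = ρ + 2√(ρ L)` with `L = log (1/δ)`, the ratio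
is at most `exp ε` outside the event `⟨Δ, x - D(V)⟩ ≥ 2v√(ρ L)`. That event has probability at
most `exp (-L) = δ` by the Chernoff bound for the sub-Gaussian sum `⟨Δ, x - D(V)⟩`.
-/

open MeasureTheory ProbabilityTheory Real
open scoped ENNReal NNReal

/-- The weekly total ARP degree: week `j`'s degree sum is the number of directed edges
(ordered pairs of users) in the ARP-request graph of week `j`. -/
def weeklyDegrees {n t : ℕ} (V : Fin t → Finset (Fin n × Fin n)) : Fin t → ℝ :=
  fun j => ((V j).card : ℝ)

lemma indist_of_restrict_compl_le {X : Type*} [MeasurableSpace X] {μ ν : Measure X} {ε δ : ℝ}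
    (B : Set X) (hB : μ B ≤ ENNReal.ofReal δ)
    (hBc : μ.restrict Bᶜ ≤ ENNReal.ofReal (exp ε) • ν) : Indist μ ν ε δ := by
  intro S hS
  calc μ S ≤ μ (S ∩ B) + μ (S \ B) := measure_le_inter_add_sdiff μ S B
    _ ≤ ENNReal.ofReal δ + ENNReal.ofReal (exp ε) * ν S := by
        gcongr
        · exact (measure_mono Set.inter_subset_right).trans hB
        · rw [Set.sdiff_eq, ← Measure.restrict_apply hS]
          exact hBc S
    _ = _ := add_comm _ _

lemma Indist.map {X Y : Type*} [MeasurableSpace X] [MeasurableSpace Y] {μ ν : Measure X}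
    {ε δ : ℝ} (h : Indist μ ν ε δ) {f : X → Y} (hf : Measurable f) :
    Indist (μ.map f) (ν.map f) ε δ := by
  intro S hS
  rw [Measure.map_apply hf hS, Measure.map_apply hf hS]
  exact h _ (hf hS)

lemma restrict_withDensity_le_smul {α : Type*} [MeasurableSpace α] {ν : Measure α}
    {f : α → ℝ≥0∞} {s : Set α} (hs : MeasurableSet s) {C : ℝ≥0∞} (hfC : ∀ x ∈ s, f x ≤ C) :
    (ν.withDensity f).restrict s ≤ C • ν := by
  rw [restrict_withDensity hs]
  calc (ν.restrict s).withDensity f ≤ (ν.restrict s).withDensity fun _ => C :=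
        withDensity_mono ((ae_restrict_iff' hs).2 (ae_of_all _ hfC))
    _ = C • ν.restrict s := withDensity_const C
    _ ≤ C • ν := by gcongr; exact Measure.restrict_le_self

lemma MeasureTheory.Measure.pi_eq_withDensity_prod {ι : Type*} [Fintype ι] {Ω : ι → Type*}
    [∀ i, MeasurableSpace (Ω i)] {μ ν : ∀ i, Measure (Ω i)} [∀ i, IsProbabilityMeasure (μ i)]
    [∀ i, SigmaFinite (ν i)] {f : ∀ i, Ω i → ℝ≥0∞} (hf : ∀ i, Measurable (f i))
    (hν : ∀ i, ν i = (μ i).withDensity (f i)) :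
    Measure.pi ν = (Measure.pi μ).withDensity fun x => ∏ i, f i (x i) := by
  refine Measure.pi_eq fun s hs => ?_
  have hbox : (Set.univ.pi s).indicator (fun x => ∏ i, f i (x i))
      = fun x => ∏ i, (s i).indicator (f i) (x i) := by
    ext x
    classical
    simp [Set.indicator_apply, Finset.prod_ite_zero]
  rw [withDensity_apply _ (.univ_pi hs), ← lintegral_indicator (.univ_pi hs), hbox,
    lintegral_prod_eq_prod_lintegral_of_indepFun _ _
      (iIndepFun_pi fun i => ((hf i).indicator (hs i)).aemeasurable)
      fun i => ((hf i).indicator (hs i)).comp (measurable_pi_apply i)]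
  refine Finset.prod_congr rfl fun i _ => ?_
  rw [(measurePreserving_eval μ i).lintegral_comp ((hf i).indicator (hs i)),
    lintegral_indicator (hs i), hν i, withDensity_apply _ (hs i)]

lemma gaussianReal_eq_withDensity_gaussianReal (a b : ℝ) {v : ℝ≥0} (hv : v ≠ 0) :
    gaussianReal a v = (gaussianReal b v).withDensity
      fun z => ENNReal.ofReal (exp (((z - b) ^ 2 - (z - a) ^ 2) / (2 * v))) := by
  rw [gaussianReal_of_var_ne_zero _ hv, gaussianReal_of_var_ne_zero _ hv,
    ← withDensity_mul _ (measurable_gaussianPDF _ _) (by fun_prop)]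
  congr 1
  ext z
  rw [Pi.mul_apply, gaussianPDF, gaussianPDF, ← ENNReal.ofReal_mul (gaussianPDFReal_nonneg _ _ _),
    gaussianPDFReal, gaussianPDFReal, mul_assoc _ (rexp _), ← exp_add]
  congr 3
  ring

lemma pi_gaussianReal_eq_withDensity {ι : Type*} [Fintype ι] (a b : ι → ℝ) {v : ℝ≥0}
    (hv : v ≠ 0) :
    Measure.pi (fun i => gaussianReal (a i) v)
      = (Measure.pi fun i => gaussianReal (b i) v).withDensity fun x =>
        ENNReal.ofReal (exp (∑ i, ((x i - b i) ^ 2 - (x i - a i) ^ 2) / (2 * v))) := by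
  rw [Measure.pi_eq_withDensity_prod (fun i => by fun_prop)
    fun i => gaussianReal_eq_withDensity_gaussianReal (a i) (b i) hv]
  simp_rw [exp_sum, ENNReal.ofReal_prod_of_nonneg fun i _ => (exp_pos _).le]

lemma map_const_add_pi_gaussianReal {ι : Type*} [Fintype ι] (a : ι → ℝ) (v : ℝ≥0) :
    (Measure.pi fun _ : ι => gaussianReal 0 v).map (a + ·)
      = Measure.pi fun i => gaussianReal (a i) v := by
  have h := Measure.pi_map_pi (μ := fun _ : ι => gaussianReal 0 v) (f := fun i => (a i + ·))
    fun i => by fun_prop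
  simp_rw [gaussianReal_map_const_add, zero_add] at h
  exact h

lemma ProbabilityTheory.HasSubgaussianMGF.mono {Ω : Type*} [MeasurableSpace Ω] {X : Ω → ℝ}
    {μ : Measure Ω} {c c' : ℝ≥0} (h : HasSubgaussianMGF X c μ) (hc : c ≤ c') :
    HasSubgaussianMGF X c' μ :=
  ⟨h.integrable_exp_mul, fun t => (h.mgf_le t).trans (exp_le_exp.2 (by gcongr))⟩

lemma hasSubgaussianMGF_sub_gaussianReal (m : ℝ) (v : ℝ≥0) :
    HasSubgaussianMGF (fun z => z - m) v (gaussianReal m v) := by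
  rw [← HasSubgaussianMGF.id_map_iff (by fun_prop), gaussianReal_map_sub_const, sub_self]
  exact ⟨integrable_exp_mul_gaussianReal, fun t => by simp [mgf_id_gaussianReal]⟩

-- Any upper bound `τ` of the variance will do; with the exact variance the case `Δ = 0`
-- would give the useless bound `exp (-c ^ 2 / 0) = 1`.
lemma measureReal_pi_gaussianReal_le {ι : Type*} [Fintype ι] (a Δ : ι → ℝ) (v : ℝ≥0) {τ c : ℝ}
    (hτ : ∑ i, Δ i ^ 2 * v ≤ τ) (hc : 0 ≤ c) :
    (Measure.pi fun i => gaussianReal (a i) v).real {x | c ≤ ∑ i, Δ i * (x i - a i)}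
      ≤ exp (-c ^ 2 / (2 * τ)) := by
  have hτ₀ : 0 ≤ τ := (Finset.sum_nonneg fun i _ => by positivity).trans hτ
  have hcoord : ∀ i, HasSubgaussianMGF ((fun z => Δ i * (z - a i)) ∘ fun x : ι → ℝ => x i)
      (⟨Δ i ^ 2, sq_nonneg _⟩ * v) (Measure.pi fun i => gaussianReal (a i) v) := fun i => by
    have h := (hasSubgaussianMGF_sub_gaussianReal (a i) v).const_mul (Δ i)
    rw [← (measurePreserving_eval (fun i => gaussianReal (a i) v) i).map_eq] at h
    exact HasSubgaussianMGF.of_map (measurable_pi_apply i).aemeasurable h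
  have hsum := (HasSubgaussianMGF.sum_of_iIndepFun
    (iIndepFun_pi (X := fun i z => Δ i * (z - a i)) fun i => by fun_prop)
    fun i _ => hcoord i).mono (c' := τ.toNNReal) (by
      rw [← NNReal.coe_le_coe, Real.coe_toNNReal _ hτ₀]
      push_cast
      exact hτ)
  simpa [Real.coe_toNNReal _ hτ₀] using hsum.measure_ge_le hc

theorem indist_pi_gaussianReal {ι : Type*} [Fintype ι] {a b : ι → ℝ} {v : ℝ≥0} (hv : v ≠ 0)
    {ρ L : ℝ} (hρ : 0 < ρ) (hL : 0 ≤ L) (hab : ∑ i, (a i - b i) ^ 2 ≤ 2 * v * ρ) :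
    Indist (Measure.pi fun i => gaussianReal (a i) v) (Measure.pi fun i => gaussianReal (b i) v)
      (ρ + 2 * √(ρ * L)) (exp (-L)) := by
  have hv₀ : (0 : ℝ) < v := by positivity
  set c := 2 * v * √(ρ * L)
  set B := {x : ι → ℝ | c ≤ ∑ i, (a i - b i) * (x i - a i)}
  have hB : MeasurableSet B := measurableSet_le measurable_const (by fun_prop)
  refine indist_of_restrict_compl_le B ?_ ?_
  · have htail := measureReal_pi_gaussianReal_le a (fun i => a i - b i) v
      (τ := 2 * v ^ 2 * ρ) (c := c) (by rw [← Finset.sum_mul]; nlinarith) (by positivity)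
    have hexp : -c ^ 2 / (2 * (2 * v ^ 2 * ρ)) = -L := by
      rw [mul_pow, Real.sq_sqrt (by positivity)]
      field_simp
    rw [hexp] at htail
    exact (ENNReal.le_ofReal_iff_toReal_le (measure_ne_top _ _) (exp_pos _).le).2 htail
  · rw [pi_gaussianReal_eq_withDensity a b hv]
    refine restrict_withDensity_le_smul hB.compl fun x hx => ?_
    have hx : ∑ i, (a i - b i) * (x i - a i) < c := not_le.1 hx
    have hloss : ∑ i, ((x i - b i) ^ 2 - (x i - a i) ^ 2) / (2 * v)
        = (2 * ∑ i, (a i - b i) * (x i - a i) + ∑ i, (a i - b i) ^ 2) / (2 * v) := by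
      rw [← Finset.sum_div, Finset.mul_sum, ← Finset.sum_add_distrib]
      congr 1
      exact Finset.sum_congr rfl fun i _ => by ring
    gcongr
    rw [hloss, div_le_iff₀ (by positivity)]
    nlinarith

lemma sq_sub_sqrt_add_two_mul_sqrt_mul {L ε : ℝ} (hL : 0 ≤ L) (hε : 0 ≤ ε) :
    (√(L + ε) - √L) ^ 2 + 2 * √((√(L + ε) - √L) ^ 2 * L) = ε := by
  have hs : 0 ≤ √(L + ε) - √L := sub_nonneg.2 (Real.sqrt_le_sqrt (by linarith))
  rw [Real.sqrt_mul (sq_nonneg _), Real.sqrt_sq hs]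
  nlinarith [Real.sq_sqrt hL, Real.sq_sqrt (add_nonneg hL hε)]

lemma sq_card_sub_card_le_one {α : Type*} [DecidableEq α] {A B : Finset α} {e : α}
    (h : ∀ p, p ≠ e → (p ∈ A ↔ p ∈ B)) : ((A.card : ℝ) - B.card) ^ 2 ≤ 1 := by
  have herase : A.erase e = B.erase e := by
    ext p
    by_cases hp : p = e
    · simp [hp]
    · simp [hp, h p hp]
  have hle : ∀ {C D : Finset α}, C.erase e = D.erase e → C.card ≤ D.card + 1 := fun {C D} hCD => by
    have hC := hCD ▸ Finset.pred_card_le_card_erase (s := C) (a := e)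
    have hD := Finset.card_erase_le (s := D) (a := e)
    omega
  have hA : (A.card : ℝ) ≤ B.card + 1 := by exact_mod_cast hle herase
  have hB : (B.card : ℝ) ≤ A.card + 1 := by exact_mod_cast hle herase.symm
  nlinarith

theorem naive_delta_approach_edge_dp_general (n t : ℕ) (ht : 0 < t)
    (ε δ : ℝ) (hε : 0 < ε) (hδ₀ : 0 < δ) (hδ₁ : δ < 1) (ρ : ℝ)
    (hρ : ρ = (Real.sqrt (Real.log (1 / δ) + ε) - Real.sqrt (Real.log (1 / δ))) ^ 2)
    (V V' : Fin t → Finset (Fin n × Fin n))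
    (hneighbor : ∃ e : Fin n × Fin n, ∀ j : Fin t, ∀ p : Fin n × Fin n, p ≠ e →
      (p ∈ V j ↔ p ∈ V' j))
    (P : (Fin t → ℝ) → (Fin t → ℝ)) (hP : Measurable P) :
    Indist
      (Measure.map (fun y => P (weeklyDegrees V + y))
        (Measure.pi fun _ : Fin t => gaussianReal 0 (((t : ℝ) / (2 * ρ)).toNNReal)))
      (Measure.map (fun y => P (weeklyDegrees V' + y))
        (Measure.pi fun _ : Fin t => gaussianReal 0 (((t : ℝ) / (2 * ρ)).toNNReal)))
      ε δ := by
  obtain ⟨e, he⟩ := hneighbor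
  set L := Real.log (1 / δ) with hLdef
  have hL : 0 ≤ L := Real.log_nonneg (one_le_one_div hδ₀ hδ₁.le)
  have hρ₀ : 0 < ρ := hρ ▸ pow_pos (sub_pos.2 (Real.sqrt_lt_sqrt hL (by linarith))) 2
  have hv : ((t : ℝ) / (2 * ρ)).toNNReal ≠ 0 := by positivity
  have hsens : ∑ j, (weeklyDegrees V j - weeklyDegrees V' j) ^ 2
      ≤ 2 * (((t : ℝ) / (2 * ρ)).toNNReal : ℝ) * ρ := by
    rw [Real.coe_toNNReal _ (by positivity)]
    calc ∑ j, (weeklyDegrees V j - weeklyDegrees V' j) ^ 2 ≤ ∑ _j : Fin t, (1 : ℝ) :=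
          Finset.sum_le_sum fun j _ => sq_card_sub_card_le_one (he j)
      _ = 2 * (t / (2 * ρ)) * ρ := by field_simp; simp
  have hε' : ρ + 2 * √(ρ * L) = ε := hρ ▸ sq_sub_sqrt_add_two_mul_sqrt_mul hL hε.le
  have hδ : exp (-L) = δ := by rw [hLdef, one_div, Real.log_inv, neg_neg, Real.exp_log hδ₀]
  have hmech := indist_pi_gaussianReal hv hρ₀ hL hsens
  rw [hε', hδ] at hmech
  change Indist (Measure.map (P ∘ (weeklyDegrees V + ·)) _)
    (Measure.map (P ∘ (weeklyDegrees V' + ·)) _) ε δ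
  rw [← Measure.map_map hP (measurable_const_add _), ← Measure.map_map hP (measurable_const_add _),
    map_const_add_pi_gaussianReal, map_const_add_pi_gaussianReal]
  exact hmech.map hP

/-- The naïve-δ approach satisfies `(ε, δ)`-edge-differential privacy: on edge-neighboring
weekly ARP-request graphs, releasing the weekly total degrees perturbed by i.i.d. Gaussian
noise of mean `0` and variance `t/(2ρ)`, where `ρ = (√(log(1/δ) + ε) − √(log(1/δ)))²`,
followed by any measurable post-processing `P`, is `(ε, δ)`-indistinguishable. -/
theorem naive_delta_approach_edge_dp (n t : ℕ) (hn : 0 < n) (ht : 0 < t)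
    (ε δ : ℝ) (hε : 0 < ε) (hδ₀ : 0 < δ) (hδ₁ : δ < 1) (ρ : ℝ)
    (hρ : ρ = (Real.sqrt (Real.log (1 / δ) + ε) - Real.sqrt (Real.log (1 / δ))) ^ 2)
    (V V' : Fin t → Finset (Fin n × Fin n))
    (hneighbor : ∃ e : Fin n × Fin n, ∀ j : Fin t, ∀ p : Fin n × Fin n, p ≠ e →
      (p ∈ V j ↔ p ∈ V' j))
    (P : (Fin t → ℝ) → (Fin t → ℝ)) (hP : Measurable P) :
    Indist
      (Measure.map (fun y => P (weeklyDegrees V + y))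
        (Measure.pi fun _ : Fin t => gaussianReal 0 (((t : ℝ) / (2 * ρ)).toNNReal)))
      (Measure.map (fun y => P (weeklyDegrees V' + y))
        (Measure.pi fun _ : Fin t => gaussianReal 0 (((t : ℝ) / (2 * ρ)).toNNReal)))
      ε δ :=
  naive_delta_approach_edge_dp_general n t ht ε δ hε hδ₀ hδ₁ ρ hρ V V' hneighbor P hP
end

section
/- Let m be a positive natural number, β : ℕ → Fin m a binning function, s a finite multiset of natural numbers (the degrees of the users), and a an element of s. Then ∑ b : Fin m, |((s.map β).count b : ℤ) − (((s.erase a).map β).count b : ℤ)| = 1. (Node-sensitivity of the degree histogram: removing a single user from the degree data changes exactly one histogram bin count, by exactly one, so the ℓ1-sensitivity of the histogram under node removal is 1.) -/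
/-- Node-sensitivity of the degree histogram: removing a single element `a` from a
multiset `s` of degrees changes exactly one histogram bin count, by exactly one, so the
ℓ1-sensitivity of the binned degree histogram under node removal is `1`. -/
theorem histogram_node_sensitivity (m : ℕ) (hm : 0 < m) (β : ℕ → Fin m)
    (s : Multiset ℕ) (a : ℕ) (ha : a ∈ s) :
    ∑ b : Fin m, |((s.map β).count b : ℤ) - (((s.erase a).map β).count b : ℤ)| = 1 := by
  have h : s.map β = β a ::ₘ (s.erase a).map β := by
    rw [← Multiset.map_cons, Multiset.cons_erase ha]
  have : ∀ b : Fin m,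
      |((s.map β).count b : ℤ) - (((s.erase a).map β).count b : ℤ)|
        = if b = β a then 1 else 0 := by
    intro b
    rw [h, Multiset.count_cons]
    split <;> simp
  simp only [this]
  simp
end
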